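/- arXiv:math/9802011 — 3 statements merged into one kernel-verified Lean document; each statement's English description precedes it below -/
import Mathlib

section
/- Let m ≥ 1 and k ≥ 1 be natural numbers, let ζ ∈ ℂ be a primitive m-th root of unity, let x ∈ ℂ⟦τ⟧ be a formal power series whose coefficients of τ^j vanish for all j < k and whose coefficient a of τ^k is nonzero, and let u ∈ ℂ⟦τ⟧ be a power series whose constant coefficient u₀ satisfies u₀^m = 1. Let φ ∈ ℂ⟦τ⟧ be the product over ν = 0, …, m−1 of the substitutions x(ζ^ν · τ · u(τ)). Then the coefficient of τ^j in φ vanishes for every j < m·k, and the coefficient of τ^{m·k} in φ equals (−1)^{k(m−1)} · a^m. (This is the key computation in the proof of Theorem 5.1 'Endspurt': the composed map defining the monstrance has multiplicity m·k and its leading term is independent of the choice of projection.) -/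
/-!
Each factor `x(ζ^ν τ u)` is divisible by `τ^k`, with `τ^k`-coefficient `a (ζ^ν u₀)^k`, so the
product is divisible by `τ^{mk}` with `τ^{mk}`-coefficient `a^m (u₀^m)^k (∏_ν ζ^ν)^k`. The product
of all `m`-th roots of unity is `(-1)^{m-1}`, as one reads off from the constant term of
`X^m - 1 = ∏_ν (X - ζ^ν)`.
-/

/-- Substitution of the power series `s` (assumed to have vanishing constant
coefficient) into the power series `x`: the coefficient of `τ^n` in `x(s)` is
`∑_{j ≤ n} (coeff j x) · (coeff n (s^j))`.  When the constant coefficient of `s`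
vanishes, `coeff n (s^j) = 0` for `j > n`, so this is the usual substitution
(`PowerSeries.subst`). -/
noncomputable def substPS (s x : PowerSeries ℂ) : PowerSeries ℂ :=
  PowerSeries.mk fun n =>
    ∑ j ∈ Finset.range (n + 1), (PowerSeries.coeff j x) * (PowerSeries.coeff n (s ^ j))

open Finset PowerSeries

theorem IsPrimitiveRoot.prod_range_pow {R : Type*} [CommRing R] [IsDomain R] {n : ℕ} {ζ : R}
    (hζ : IsPrimitiveRoot ζ n) : ∏ i ∈ range n, ζ ^ i = (-1) ^ (n - 1) := by
  cases n with
  | zero => simp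
  | succ n =>
    have h := congrArg (Polynomial.eval 0) (X_pow_sub_C_eq_prod hζ n.succ_pos (one_pow _))
    simp only [Polynomial.eval_sub, Polynomial.eval_pow, Polynomial.eval_X, Polynomial.eval_C,
      Polynomial.eval_prod, zero_sub, mul_one, ne_eq, n.succ_ne_zero, not_false_eq_true,
      zero_pow, prod_neg, card_range] at h
    have hsq : ((-1 : R) ^ n) ^ 2 = 1 := by rw [← pow_mul, pow_mul', neg_one_sq, one_pow]
    rw [add_tsub_cancel_right]
    linear_combination (-1) ^ n * h - (∏ i ∈ range (n + 1), ζ ^ i) * hsq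

namespace PowerSeries

variable {R : Type*} [CommRing R]

theorem coeff_add_mul_of_X_pow_dvd {a b : ℕ} {f g : R⟦X⟧} (hf : X ^ a ∣ f) (hg : X ^ b ∣ g) :
    coeff (a + b) (f * g) = coeff a f * coeff b g := by
  obtain ⟨f, rfl⟩ := hf
  obtain ⟨g, rfl⟩ := hg
  rw [mul_mul_mul_comm, ← pow_add]
  simp [coeff_X_pow_mul']

theorem X_pow_sum_dvd_prod {ι : Type*} {s : Finset ι} {k : ι → ℕ} {f : ι → R⟦X⟧}
    (h : ∀ i ∈ s, X ^ k i ∣ f i) : X ^ (∑ i ∈ s, k i) ∣ ∏ i ∈ s, f i := by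
  rw [← prod_pow_eq_pow_sum]
  exact prod_dvd_prod_of_dvd _ _ h

theorem coeff_sum_prod_of_X_pow_dvd {ι : Type*} [DecidableEq ι] {s : Finset ι} {k : ι → ℕ}
    {f : ι → R⟦X⟧} (h : ∀ i ∈ s, X ^ k i ∣ f i) :
    coeff (∑ i ∈ s, k i) (∏ i ∈ s, f i) = ∏ i ∈ s, coeff (k i) (f i) := by
  induction s using Finset.induction_on with
  | empty => simp
  | insert i s hi ih =>
    have hs : ∀ j ∈ s, X ^ k j ∣ f j := fun j hj ↦ h j (mem_insert_of_mem hj)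
    rw [sum_insert hi, prod_insert hi, prod_insert hi,
      coeff_add_mul_of_X_pow_dvd (h i (mem_insert_self i s)) (X_pow_sum_dvd_prod hs), ih hs]

end PowerSeries

theorem X_pow_dvd_substPS {k : ℕ} {x : PowerSeries ℂ} (hx : X ^ k ∣ x) (s : PowerSeries ℂ) :
    X ^ k ∣ substPS s x := by
  rw [X_pow_dvd_iff] at hx ⊢
  intro n hn
  simp only [substPS, coeff_mk]
  exact sum_eq_zero fun j hj ↦ by rw [hx j (by grind), zero_mul]

theorem coeff_substPS_X_mul_of_X_pow_dvd {k : ℕ} {x : PowerSeries ℂ} (hx : X ^ k ∣ x)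
    (t : PowerSeries ℂ) :
    coeff k (substPS (X * t) x) = coeff k x * constantCoeff t ^ k := by
  rw [X_pow_dvd_iff] at hx
  simp only [substPS, coeff_mk]
  rw [sum_eq_single_of_mem k (self_mem_range_succ k) fun j hj hjk ↦ by
    rw [hx j (by grind), zero_mul]]
  rw [mul_pow, coeff_X_pow_mul', if_pos le_rfl, Nat.sub_self, coeff_zero_eq_constantCoeff,
    map_pow]

theorem stmt1_general (m k : ℕ)
    (ζ : ℂ) (hζ : IsPrimitiveRoot ζ m)
    (x u : PowerSeries ℂ)
    (hx : ∀ j < k, PowerSeries.coeff j x = 0)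
    (a : ℂ) (ha : a = PowerSeries.coeff k x)
    (hu : (PowerSeries.constantCoeff u) ^ m = 1)
    (φ : PowerSeries ℂ)
    (hφ : φ = ∏ ν ∈ Finset.range m,
      substPS (PowerSeries.C (ζ ^ ν) * PowerSeries.X * u) x) :
    (∀ j < m * k, PowerSeries.coeff j φ = 0) ∧
      PowerSeries.coeff (m * k) φ = (-1) ^ (k * (m - 1)) * a ^ m := by
  have hxk : X ^ k ∣ x := X_pow_dvd_iff.mpr hx
  have hdvd : ∀ ν ∈ range m, X ^ k ∣ substPS (X * (C (ζ ^ ν) * u)) x :=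
    fun ν _ ↦ X_pow_dvd_substPS hxk _
  have hmk : ∑ _ν ∈ range m, k = m * k := by rw [sum_const, card_range, smul_eq_mul]
  have hφ' : φ = ∏ ν ∈ range m, substPS (X * (C (ζ ^ ν) * u)) x := by
    simp only [hφ, mul_comm (C _) X, mul_assoc]
  rw [hφ', ← hmk]
  refine ⟨X_pow_dvd_iff.mp (X_pow_sum_dvd_prod hdvd), ?_⟩
  rw [coeff_sum_prod_of_X_pow_dvd hdvd]
  simp only [coeff_substPS_X_mul_of_X_pow_dvd hxk, ← ha, map_mul, constantCoeff_C,
    mul_pow, prod_mul_distrib, prod_const, card_range, prod_pow, hζ.prod_range_pow]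
  rw [pow_right_comm (constantCoeff u), hu, one_pow, mul_one, ← pow_mul, mul_comm (m - 1), mul_comm]

/-- The key computation in the proof of Theorem 5.1 ("Endspurt"): the product
`φ(τ) = ∏_{ν=0}^{m-1} x(ζ^ν · τ · u(τ))` has multiplicity `m·k` and its leading
coefficient is `(-1)^{k(m-1)} a^m`, where `a` is the leading coefficient of `x`. -/
theorem stmt1 (m k : ℕ) (hm : 1 ≤ m) (hk : 1 ≤ k)
    (ζ : ℂ) (hζ : IsPrimitiveRoot ζ m)
    (x u : PowerSeries ℂ)
    (hx : ∀ j < k, PowerSeries.coeff j x = 0)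
    (a : ℂ) (ha : a = PowerSeries.coeff k x) (ha0 : a ≠ 0)
    (hu : (PowerSeries.constantCoeff u) ^ m = 1)
    (φ : PowerSeries ℂ)
    (hφ : φ = ∏ ν ∈ Finset.range m,
      substPS (PowerSeries.C (ζ ^ ν) * PowerSeries.X * u) x) :
    (∀ j < m * k, PowerSeries.coeff j φ = 0) ∧
      PowerSeries.coeff (m * k) φ = (-1) ^ (k * (m - 1)) * a ^ m :=
  stmt1_general m k ζ hζ x u hx a ha hu φ hφ
end

section
/- Let A₁, A₂, A₃ be complex vector spaces equipped with linear maps d₁ : A₁ → A₂ and d₂ : A₂ → A₃ satisfying d₂ ∘ d₁ = 0, and bilinear products ∧ : A₁ × A₁ → A₂, ∧ : A₂ × A₁ → A₃, ∧ : A₁ × A₂ → A₃ satisfying the Leibniz rule d₂(α ∧ β) = (d₁α) ∧ β − α ∧ (d₁β) for α, β ∈ A₁ and the associativity (α ∧ β) ∧ γ = α ∧ (β ∧ γ) for α, β, γ ∈ A₁. Assume H² = 0 in the sense that every ψ ∈ A₂ with d₂ψ = 0 is of the form d₁α for some α ∈ A₁. Let φ₁, …, φ_s ∈ A₁ be closed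 (d₁φᵢ = 0). Then there exists an assignment I ↦ φ_I ∈ A₁, defined for all nonempty finite sequences I with entries in {1, …, s}, with φ_(i) = φᵢ for singletons, such that for every sequence I of length ν ≥ 2 one has d₁φ_I + Σ_{k=1}^{ν−1} φ_{I≤k} ∧ φ_{I>k} = 0, where I≤k and I>k denote the initial segment of length k and the complementary final segment of I. (The existence assertion of Lemma 3.4 'Ligeti' for a differential graded algebra with vanishing second cohomology.) -/
open Finset

/-- Auxiliary recursion with fuel: builds the family `Φ_I`. -/
noncomputable def ligAux {A₁ A₂ : Type*} [AddCommGroup A₁] [Module ℂ A₁]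
    [AddCommGroup A₂] [Module ℂ A₂]
    (w : A₁ →ₗ[ℂ] A₁ →ₗ[ℂ] A₂) (σ : A₂ → A₁) {s : ℕ} (φ : Fin s → A₁) :
    ℕ → List (Fin s) → A₁
  | _, [] => 0
  | _, [i] => φ i
  | 0, _ :: _ :: _ => 0
  | (n+1), (a :: b :: t) => σ (-(∑ k ∈ Finset.Ico 1 (a :: b :: t).length,
      w (ligAux w σ φ n ((a :: b :: t).take k)) (ligAux w σ φ n ((a :: b :: t).drop k))))

section ligAuxLemmas

variable {A₁ A₂ : Type*} [AddCommGroup A₁] [Module ℂ A₁] [AddCommGroup A₂] [Module ℂ A₂]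
    (w : A₁ →ₗ[ℂ] A₁ →ₗ[ℂ] A₂) (σ : A₂ → A₁) {s : ℕ} (φ : Fin s → A₁)

lemma ligAux_nil (n : ℕ) : ligAux w σ φ n [] = 0 := by cases n <;> rfl

lemma ligAux_single (n : ℕ) (i : Fin s) : ligAux w σ φ n [i] = φ i := by cases n <;> rfl

lemma ligAux_cons (n : ℕ) (a b : Fin s) (t : List (Fin s)) :
    ligAux w σ φ (n+1) (a :: b :: t) = σ (-(∑ k ∈ Finset.Ico 1 (a :: b :: t).length,
      w (ligAux w σ φ n ((a :: b :: t).take k)) (ligAux w σ φ n ((a :: b :: t).drop k)))) :=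
  rfl

lemma ligAux_fuel : ∀ (N : ℕ) (L : List (Fin s)) (n m : ℕ),
    L.length ≤ N → L.length ≤ n + 1 → L.length ≤ m + 1 →
    ligAux w σ φ n L = ligAux w σ φ m L := by
  intro N
  induction N with
  | zero =>
    intro L n m h _ _
    rw [List.length_eq_zero_iff.mp (Nat.le_zero.mp h)]
    simp [ligAux_nil]
  | succ N ih =>
    intro L n m hN hn hm
    match L with
    | [] => simp [ligAux_nil]
    | [i] => simp [ligAux_single]
    | a :: b :: t =>
      have hlen : (a :: b :: t).length = t.length + 2 := by simp
      obtain ⟨n', rfl⟩ : ∃ n', n = n' + 1 := ⟨n - 1, by omega⟩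
      obtain ⟨m', rfl⟩ : ∃ m', m = m' + 1 := ⟨m - 1, by omega⟩
      rw [ligAux_cons, ligAux_cons]
      congr 2
      apply Finset.sum_congr rfl
      intro k hk
      simp only [Finset.mem_Ico] at hk
      have h1 : ((a :: b :: t).take k).length = k := by
        rw [List.length_take]; omega
      have h2 : ((a :: b :: t).drop k).length = t.length + 2 - k := by
        rw [List.length_drop]; omega
      rw [ih ((a :: b :: t).take k) n' m' (by omega) (by omega) (by omega),
        ih ((a :: b :: t).drop k) n' m' (by omega) (by omega) (by omega)]

end ligAuxLemmas

/-- The existence assertion of Lemma 3.4 ("Ligeti") for a differential graded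
algebra with vanishing second cohomology: given closed degree-1 elements
`φ₁, …, φ_s`, there is a family `I ↦ φ_I` indexed by nonempty finite sequences
with entries in `{1, …, s}` (here: nonempty lists of elements of `Fin s`),
extending the `φᵢ` on singletons, with
`d φ_I + ∑_{k=1}^{ν-1} φ_{I≤k} ∧ φ_{I>k} = 0` for every `I` of length `ν ≥ 2`. -/
theorem stmt8 {A₁ A₂ A₃ : Type*}
    [AddCommGroup A₁] [Module ℂ A₁] [AddCommGroup A₂] [Module ℂ A₂]
    [AddCommGroup A₃] [Module ℂ A₃]
    (d₁ : A₁ →ₗ[ℂ] A₂) (d₂ : A₂ →ₗ[ℂ] A₃)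
    (w₁₁ : A₁ →ₗ[ℂ] A₁ →ₗ[ℂ] A₂) (w₂₁ : A₂ →ₗ[ℂ] A₁ →ₗ[ℂ] A₃)
    (w₁₂ : A₁ →ₗ[ℂ] A₂ →ₗ[ℂ] A₃)
    (hdd : ∀ α : A₁, d₂ (d₁ α) = 0)
    (hleib : ∀ α β : A₁, d₂ (w₁₁ α β) = w₂₁ (d₁ α) β - w₁₂ α (d₁ β))
    (hassoc : ∀ α β γ : A₁, w₂₁ (w₁₁ α β) γ = w₁₂ α (w₁₁ β γ))
    (hH2 : ∀ ψ : A₂, d₂ ψ = 0 → ∃ α : A₁, d₁ α = ψ)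
    (s : ℕ) (φ : Fin s → A₁) (hφ : ∀ i, d₁ (φ i) = 0) :
    ∃ Φ : List (Fin s) → A₁,
      (∀ i : Fin s, Φ [i] = φ i) ∧
      ∀ L : List (Fin s), 2 ≤ L.length →
        d₁ (Φ L) + ∑ k ∈ Finset.Ico 1 L.length, w₁₁ (Φ (L.take k)) (Φ (L.drop k)) = 0 := by
  -- a section of `d₁` on closed elements
  have hsec : ∀ ψ : A₂, ∃ α : A₁, d₂ ψ = 0 → d₁ α = ψ := by
    intro ψ
    by_cases h : d₂ ψ = 0
    · obtain ⟨α, hα⟩ := hH2 ψ h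
      exact ⟨α, fun _ => hα⟩
    · exact ⟨0, fun h' => absurd h' h⟩
  choose σ hσ using hsec
  set Φ : List (Fin s) → A₁ := fun L => ligAux w₁₁ σ φ L.length L with hΦdef
  have hsingle : ∀ i : Fin s, Φ [i] = φ i := fun i => ligAux_single w₁₁ σ φ _ i
  -- the recurrence satisfied by Φ on lists of length ≥ 2
  have hΦeq : ∀ L : List (Fin s), 2 ≤ L.length →
      Φ L = σ (-(∑ k ∈ Finset.Ico 1 L.length, w₁₁ (Φ (L.take k)) (Φ (L.drop k)))) := by
    intro L hL
    match L with
    | a :: b :: t =>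
      have hlen : (a :: b :: t).length = t.length + 2 := by simp
      show ligAux w₁₁ σ φ (a :: b :: t).length (a :: b :: t) = _
      rw [hlen, ligAux_cons]
      congr 2
      apply Finset.sum_congr rfl
      intro k hk
      simp only [Finset.mem_Ico] at hk
      have h1 : ((a :: b :: t).take k).length = k := by
        rw [List.length_take]; omega
      have h2 : ((a :: b :: t).drop k).length = t.length + 2 - k := by
        rw [List.length_drop]; omega
      rw [ligAux_fuel w₁₁ σ φ ((a :: b :: t).take k).length _ (t.length + 1)
          ((a :: b :: t).take k).length le_rfl (by omega) (by omega),
        ligAux_fuel w₁₁ σ φ ((a :: b :: t).drop k).length _ (t.length + 1)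
          ((a :: b :: t).drop k).length le_rfl (by omega) (by omega)]
  -- the key identity, by strong induction on the length
  have key : ∀ (N : ℕ) (L : List (Fin s)), L.length ≤ N → 1 ≤ L.length →
      d₁ (Φ L) = -(∑ k ∈ Finset.Ico 1 L.length, w₁₁ (Φ (L.take k)) (Φ (L.drop k))) := by
    intro N
    induction N with
    | zero => intro L h h1; omega
    | succ N ih =>
      intro L hN h1
      rcases Nat.lt_or_ge L.length 2 with h2 | h2
      · -- length 1
        match L with
        | [i] =>
          simp only [List.length_singleton, Finset.Ico_self, Finset.sum_empty, neg_zero]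
          rw [hsingle i]
          exact hφ i
      · set ν := L.length with hν
        set S : A₂ := ∑ k ∈ Finset.Ico 1 ν, w₁₁ (Φ (L.take k)) (Φ (L.drop k)) with hS
        -- d₂ S = 0
        have htake : ∀ k ∈ Finset.Ico 1 ν, d₁ (Φ (L.take k)) =
            -(∑ m ∈ Finset.Ico 1 k, w₁₁ (Φ (L.take m)) (Φ ((L.drop m).take (k - m)))) := by
          intro k hk
          simp only [Finset.mem_Ico] at hk
          have hlen : (L.take k).length = k := by rw [List.length_take]; omega
          rw [ih (L.take k) (by rw [hlen]; omega) (by rw [hlen]; omega), hlen]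
          congr 1
          apply Finset.sum_congr rfl
          intro m hm
          simp only [Finset.mem_Ico] at hm
          rw [List.take_take, min_eq_left (by omega : m ≤ k), List.drop_take]
        have hdrop : ∀ k ∈ Finset.Ico 1 ν, d₁ (Φ (L.drop k)) =
            -(∑ m ∈ Finset.Ico 1 (ν - k), w₁₁ (Φ ((L.drop k).take m)) (Φ (L.drop (k + m)))) := by
          intro k hk
          simp only [Finset.mem_Ico] at hk
          have hlen : (L.drop k).length = ν - k := by rw [List.length_drop]
          rw [ih (L.drop k) (by rw [hlen]; omega) (by rw [hlen]; omega), hlen]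
          congr 1
          apply Finset.sum_congr rfl
          intro m hm
          simp only [Finset.mem_Ico] at hm
          rw [List.drop_drop]
        set g : ℕ → ℕ → A₃ := fun a b =>
          w₁₂ (Φ (L.take a)) (w₁₁ (Φ ((L.drop a).take (b - a))) (Φ (L.drop b))) with hg
        have hd2S : d₂ S = 0 := by
          have e1 : d₂ S = ∑ k ∈ Finset.Ico 1 ν,
              (w₂₁ (d₁ (Φ (L.take k))) (Φ (L.drop k))
                - w₁₂ (Φ (L.take k)) (d₁ (Φ (L.drop k)))) := by
            rw [hS, map_sum]
            exact Finset.sum_congr rfl fun k _ => hleib _ _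
          have e2 : d₂ S = -(∑ k ∈ Finset.Ico 1 ν, ∑ m ∈ Finset.Ico 1 k, g m k)
              + ∑ k ∈ Finset.Ico 1 ν, ∑ m ∈ Finset.Ico 1 (ν - k), g k (k + m) := by
            rw [e1, ← Finset.sum_neg_distrib, ← Finset.sum_add_distrib]
            apply Finset.sum_congr rfl
            intro k hk
            rw [htake k hk, hdrop k hk]
            simp only [map_neg, map_sum, LinearMap.neg_apply, LinearMap.sum_apply,
              sub_neg_eq_add]
            congr 1
            · rw [neg_inj]
              apply Finset.sum_congr rfl
              intro m hm
              rw [hassoc]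
            · apply Finset.sum_congr rfl
              intro m hm
              simp [hg, Nat.add_sub_cancel_left]
          have e3 : ∑ k ∈ Finset.Ico 1 ν, ∑ m ∈ Finset.Ico 1 (ν - k), g k (k + m)
              = ∑ k ∈ Finset.Ico 1 ν, ∑ j ∈ Finset.Ico (k + 1) ν, g k j := by
            apply Finset.sum_congr rfl
            intro k hk
            simp only [Finset.mem_Ico] at hk
            rw [Finset.sum_Ico_add (fun j => g k j) 1 (ν - k) k,
              (by omega : ν - k + k = ν), Nat.add_comm 1 k]
          have e4 : ∑ k ∈ Finset.Ico 1 ν, ∑ j ∈ Finset.Ico (k + 1) ν, g k j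
              = ∑ j ∈ Finset.Ico 1 ν, ∑ k ∈ Finset.Ico 1 j, g k j :=
            Finset.sum_Ico_Ico_comm' 1 ν g
          rw [e2, e3, e4]
          exact neg_add_cancel _
        rw [hΦeq L h2, ← hS, hσ (-S) (by rw [map_neg, hd2S, neg_zero])]
  refine ⟨Φ, hsingle, fun L hL => ?_⟩
  rw [key L.length L le_rfl (by omega)]
  exact neg_add_cancel _
end

section
/- Let 0 < δ < 1, let Δ = {t ∈ ℂ : |t| < 1} be the open unit disc, and let A_δ = {p ∈ ℂ : δ < |p| < 1}. Then the map π : Δ × A_δ → Δ, (t, p) ↦ |p|·t, is a locally trivial fibration with fiber A_δ: every point s₀ ∈ Δ has an open neighborhood U ⊆ Δ together with a homeomorphism from π⁻¹(U) onto U × A_δ whose composition with the first projection equals π. (The claim of Section 1.3 that the restriction of π to Δ × D₀^δ is a locally trivial fibration.) -/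
/-!
Over `s ∈ Δ` the fibre of `π` consists of the points `(s / |p|, p)` with `max(δ, |s|) < |p| < 1`,
an annulus whose inner radius depends continuously on `s`. Rescaling `|p|` by the affine map
`(max(δ, |s|), 1) → (δ, 1)` while keeping the argument of `p` identifies this fibre with `A_δ`,
continuously in `s`; so `π` is even globally trivial.
-/

/-- The open unit disc `Δ = {t ∈ ℂ : |t| < 1}`. -/
def unitDisc : Set ℂ := {t : ℂ | ‖t‖ < 1}

/-- The open annulus `A_δ = {p ∈ ℂ : δ < |p| < 1}`. -/
def annulus (δ : ℝ) : Set ℂ := {p : ℂ | δ < ‖p‖ ∧ ‖p‖ < 1}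

/-- The map `π : Δ × A_δ → Δ`, `(t, p) ↦ |p|·t` of Section 1.3. -/
noncomputable def piMap (δ : ℝ) : unitDisc × annulus δ → unitDisc := fun x =>
  ⟨(‖(x.2 : ℂ)‖ : ℂ) * (x.1 : ℂ), by
    have h1 : ‖(x.1 : ℂ)‖ < 1 := x.1.2
    have h2 : ‖(x.2 : ℂ)‖ < 1 := x.2.2.2
    have : ‖(‖(x.2 : ℂ)‖ : ℂ) * (x.1 : ℂ)‖
        = ‖(x.2 : ℂ)‖ * ‖(x.1 : ℂ)‖ := by
      rw [norm_mul, Complex.norm_real, norm_norm]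
    show ‖_‖ < 1
    rw [this]
    calc ‖(x.2 : ℂ)‖ * ‖(x.1 : ℂ)‖
        < 1 * 1 := by
          exact mul_lt_mul'' h2 h1 (norm_nonneg _) (norm_nonneg _)
      _ = 1 := one_mul 1⟩

open Set

theorem IsHomeomorphicTrivialFiberBundle.exists_homeomorph_preimage {B F Z : Type*}
    [TopologicalSpace B] [TopologicalSpace F] [TopologicalSpace Z] {proj : Z → B}
    (h : IsHomeomorphicTrivialFiberBundle F proj) (U : Set B) :
    ∃ H : proj ⁻¹' U ≃ₜ U × F, ∀ x, ((H x).1 : B) = proj x := by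
  obtain ⟨e, he⟩ := h
  refine ⟨(e.subtype (q := (· ∈ U ×ˢ (univ : Set F))) fun x ↦ ?_).trans
    ((Homeomorph.Set.prod U univ).trans ((Homeomorph.refl U).prodCongr (Homeomorph.Set.univ F))),
    fun x ↦ he x⟩
  simp [he]

noncomputable def affineRescale (a b r : ℝ) : ℝ := b + (1 - b) * (r - a) / (1 - a)

theorem affineRescale_mem_Ioo {a b r : ℝ} (ha : a < 1) (hb : b < 1) (hr : r ∈ Ioo a 1) :
    affineRescale a b r ∈ Ioo b 1 := by
  have ha' : 0 < 1 - a := sub_pos.2 ha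
  have hfrac : (r - a) / (1 - a) ∈ Ioo 0 1 :=
    ⟨div_pos (sub_pos.2 hr.1) ha', (div_lt_one ha').2 (by linarith [hr.2])⟩
  unfold affineRescale
  rw [mul_div_assoc]
  constructor <;> nlinarith [hfrac.1, hfrac.2]

theorem affineRescale_affineRescale {a b : ℝ} (ha : a ≠ 1) (hb : b ≠ 1) (r : ℝ) :
    affineRescale b a (affineRescale a b r) = r := by
  have ha' : 1 - a ≠ 0 := sub_ne_zero.2 ha.symm
  have hb' : 1 - b ≠ 0 := sub_ne_zero.2 hb.symm
  unfold affineRescale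
  field_simp
  ring

section AnnulusMap

variable {E : Type*} [NormedAddCommGroup E] [NormedSpace ℝ E]

noncomputable def annulusMap (a b : ℝ) (p : E) : E := (affineRescale a b ‖p‖ / ‖p‖) • p

theorem norm_annulusMap {a b : ℝ} {p : E} (hp : p ≠ 0) (h : 0 ≤ affineRescale a b ‖p‖) :
    ‖annulusMap a b p‖ = affineRescale a b ‖p‖ := by
  rw [annulusMap, norm_smul, Real.norm_of_nonneg (div_nonneg h (norm_nonneg p)),
    div_mul_cancel₀ _ (norm_ne_zero_iff.2 hp)]

theorem norm_annulusMap_mem_Ioo {a b : ℝ} {p : E} (ha0 : 0 ≤ a) (ha : a < 1) (hb0 : 0 ≤ b)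
    (hb : b < 1) (hp : ‖p‖ ∈ Ioo a 1) : ‖annulusMap a b p‖ ∈ Ioo b 1 := by
  have hr := affineRescale_mem_Ioo ha hb hp
  rwa [norm_annulusMap (norm_pos_iff.1 (ha0.trans_lt hp.1)) (hb0.trans hr.1.le)]

theorem annulusMap_annulusMap {a b : ℝ} {p : E} (ha0 : 0 ≤ a) (ha : a < 1) (hb0 : 0 ≤ b)
    (hb : b < 1) (hp : ‖p‖ ∈ Ioo a 1) : annulusMap b a (annulusMap a b p) = p := by
  have hp0 : 0 < ‖p‖ := ha0.trans_lt hp.1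
  have hr : 0 < affineRescale a b ‖p‖ := hb0.trans_lt (affineRescale_mem_Ioo ha hb hp).1
  rw [annulusMap, norm_annulusMap (norm_pos_iff.1 hp0) hr.le,
    affineRescale_affineRescale ha.ne hb.ne, annulusMap, smul_smul,
    div_mul_div_cancel₀ hr.ne', div_self hp0.ne', one_smul]

theorem Continuous.annulusMap {X : Type*} [TopologicalSpace X] {a b : X → ℝ} {p : X → E}
    (ha : Continuous a) (hb : Continuous b) (hp : Continuous p) (ha1 : ∀ x, a x ≠ 1)
    (hp0 : ∀ x, p x ≠ 0) : Continuous fun x ↦ annulusMap (a x) (b x) (p x) := by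
  have hr : Continuous fun x ↦ affineRescale (a x) (b x) ‖p x‖ :=
    hb.add <| ((continuous_const.sub hb).mul (hp.norm.sub ha)).div (continuous_const.sub ha)
      fun x ↦ sub_ne_zero.2 (ha1 x).symm
  exact (hr.div hp.norm fun x ↦ norm_ne_zero_iff.2 (hp0 x)).smul hp

end AnnulusMap

section Trivialization

variable {δ : ℝ}

theorem norm_pos_of_mem_annulus (hδ0 : 0 ≤ δ) (p : annulus δ) : 0 < ‖(p : ℂ)‖ :=
  hδ0.trans_lt p.2.1

theorem norm_piMap (x : unitDisc × annulus δ) :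
    ‖(piMap δ x : ℂ)‖ = ‖(x.2 : ℂ)‖ * ‖(x.1 : ℂ)‖ := by
  simp [piMap]

theorem continuous_piMap : Continuous (piMap δ) := by
  unfold piMap; fun_prop

theorem norm_mem_Ioo_max_norm_piMap (hδ0 : 0 ≤ δ) (x : unitDisc × annulus δ) :
    ‖(x.2 : ℂ)‖ ∈ Ioo (max δ ‖(piMap δ x : ℂ)‖) 1 := by
  refine ⟨max_lt x.2.2.1 ?_, x.2.2.2⟩
  rw [norm_piMap]
  exact mul_lt_of_lt_one_right (norm_pos_of_mem_annulus hδ0 x.2) x.1.2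

noncomputable def piMapFiberCoord (hδ0 : 0 ≤ δ) (hδ1 : δ < 1) (x : unitDisc × annulus δ) :
    annulus δ :=
  ⟨annulusMap (max δ ‖(piMap δ x : ℂ)‖) δ (x.2 : ℂ),
    norm_annulusMap_mem_Ioo (le_max_of_le_left hδ0) (max_lt hδ1 (piMap δ x).2) hδ0 hδ1
      (norm_mem_Ioo_max_norm_piMap hδ0 x)⟩

theorem continuous_piMapFiberCoord (hδ0 : 0 ≤ δ) (hδ1 : δ < 1) :
    Continuous (piMapFiberCoord hδ0 hδ1) :=
  Continuous.subtype_mk (.annulusMap (by fun_prop) continuous_const (by fun_prop)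
    (fun x ↦ (max_lt hδ1 (piMap δ x).2).ne)
    fun x ↦ norm_pos_iff.1 (norm_pos_of_mem_annulus hδ0 x.2)) _

theorem norm_annulusMap_mem_Ioo_max (hδ0 : 0 ≤ δ) (hδ1 : δ < 1) (y : unitDisc × annulus δ) :
    ‖annulusMap δ (max δ ‖(y.1 : ℂ)‖) (y.2 : ℂ)‖ ∈ Ioo (max δ ‖(y.1 : ℂ)‖) 1 :=
  norm_annulusMap_mem_Ioo hδ0 hδ1 (le_max_of_le_left hδ0) (max_lt hδ1 y.1.2) y.2.2

noncomputable def piMapLift (hδ0 : 0 ≤ δ) (hδ1 : δ < 1) (y : unitDisc × annulus δ) :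
    annulus δ :=
  ⟨annulusMap δ (max δ ‖(y.1 : ℂ)‖) (y.2 : ℂ),
    (le_max_left _ _).trans_lt (norm_annulusMap_mem_Ioo_max hδ0 hδ1 y).1,
    (norm_annulusMap_mem_Ioo_max hδ0 hδ1 y).2⟩

theorem continuous_piMapLift (hδ0 : 0 ≤ δ) (hδ1 : δ < 1) : Continuous (piMapLift hδ0 hδ1) :=
  continuous_induced_rng.2 <| (Continuous.annulusMap continuous_const (by fun_prop)
    (by fun_prop) (fun _ ↦ hδ1.ne) fun y ↦ norm_pos_iff.1 (norm_pos_of_mem_annulus hδ0 y.2) :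
      Continuous fun y : unitDisc × annulus δ ↦ annulusMap δ (max δ ‖(y.1 : ℂ)‖) (y.2 : ℂ))

noncomputable def piMapTrivializationInv (hδ0 : 0 ≤ δ) (hδ1 : δ < 1)
    (y : unitDisc × annulus δ) : unitDisc × annulus δ :=
  (⟨(‖(piMapLift hδ0 hδ1 y : ℂ)‖ : ℂ)⁻¹ * y.1, by
      show ‖_‖ < 1
      rw [norm_mul, norm_inv, Complex.norm_real, norm_norm,
        inv_mul_lt_one₀ (norm_pos_of_mem_annulus hδ0 _)]
      exact (le_max_right _ _).trans_lt (norm_annulusMap_mem_Ioo_max hδ0 hδ1 y).1⟩,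
    piMapLift hδ0 hδ1 y)

theorem coe_fst_piMapTrivializationInv (hδ0 : 0 ≤ δ) (hδ1 : δ < 1)
    (y : unitDisc × annulus δ) :
    ((piMapTrivializationInv hδ0 hδ1 y).1 : ℂ) =
      (‖((piMapTrivializationInv hδ0 hδ1 y).2 : ℂ)‖ : ℂ)⁻¹ * y.1 :=
  rfl

theorem piMap_piMapTrivializationInv (hδ0 : 0 ≤ δ) (hδ1 : δ < 1) (y : unitDisc × annulus δ) :
    piMap δ (piMapTrivializationInv hδ0 hδ1 y) = y.1 :=
  Subtype.ext <| mul_inv_cancel_left₀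
    (Complex.ofReal_ne_zero.2 (norm_pos_of_mem_annulus hδ0 (piMapLift hδ0 hδ1 y)).ne') _

noncomputable def piMapTrivialization (hδ0 : 0 ≤ δ) (hδ1 : δ < 1) :
    unitDisc × annulus δ ≃ₜ unitDisc × annulus δ where
  toFun x := (piMap δ x, piMapFiberCoord hδ0 hδ1 x)
  invFun := piMapTrivializationInv hδ0 hδ1
  left_inv x := by
    have hx2 : (piMapTrivializationInv hδ0 hδ1 (piMap δ x, piMapFiberCoord hδ0 hδ1 x)).2 = x.2 :=
      Subtype.ext (annulusMap_annulusMap (le_max_of_le_left hδ0) (max_lt hδ1 (piMap δ x).2)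
        hδ0 hδ1 (norm_mem_Ioo_max_norm_piMap hδ0 x))
    refine Prod.ext (Subtype.ext ?_) hx2
    rw [coe_fst_piMapTrivializationInv, hx2]
    exact inv_mul_cancel_left₀ (Complex.ofReal_ne_zero.2 (norm_pos_of_mem_annulus hδ0 x.2).ne') _
  right_inv y := by
    have hy1 := piMap_piMapTrivializationInv hδ0 hδ1 y
    refine Prod.ext hy1 (Subtype.ext ?_)
    show annulusMap (max δ ‖(piMap δ (piMapTrivializationInv hδ0 hδ1 y) : ℂ)‖) δ _ = _
    rw [hy1]
    exact annulusMap_annulusMap hδ0 hδ1 (le_max_of_le_left hδ0) (max_lt hδ1 y.1.2) y.2.2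
  continuous_toFun := continuous_piMap.prodMk (continuous_piMapFiberCoord hδ0 hδ1)
  continuous_invFun := by
    have hlift := continuous_piMapLift hδ0 hδ1
    refine .prodMk (.subtype_mk (.mul (.inv₀ ?_ fun y ↦ ?_) (by fun_prop)) _) hlift
    · exact Complex.continuous_ofReal.comp (continuous_subtype_val.comp hlift).norm
    · exact Complex.ofReal_ne_zero.2 (norm_pos_of_mem_annulus hδ0 _).ne'

theorem isHomeomorphicTrivialFiberBundle_piMap (hδ0 : 0 ≤ δ) (hδ1 : δ < 1) :
    IsHomeomorphicTrivialFiberBundle (annulus δ) (piMap δ) :=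
  ⟨piMapTrivialization hδ0 hδ1, fun _ ↦ rfl⟩

end Trivialization

/-- The claim of Section 1.3: for `0 < δ < 1`, the map
`π : Δ × A_δ → Δ, (t, p) ↦ |p|·t` is a locally trivial fibration with fiber
`A_δ`: every point of `Δ` has an open neighborhood `U` together with a
homeomorphism `π⁻¹(U) ≅ U × A_δ` over `U`. -/
theorem stmt11 (δ : ℝ) (hδ0 : 0 < δ) (hδ1 : δ < 1) :
    ∀ s₀ : unitDisc, ∃ U : Set unitDisc, IsOpen U ∧ s₀ ∈ U ∧
      ∃ H : (piMap δ ⁻¹' U) ≃ₜ (U × annulus δ),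
        ∀ x : (piMap δ ⁻¹' U), ((H x).1 : unitDisc) = piMap δ (x : unitDisc × annulus δ) := by
  intro s₀
  obtain ⟨H, hH⟩ :=
    (isHomeomorphicTrivialFiberBundle_piMap hδ0.le hδ1).exists_homeomorph_preimage univ
  exact ⟨univ, isOpen_univ, mem_univ s₀, H, hH⟩
end
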